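/- arXiv:2504.01938 — 4 statements merged into one kernel-verified Lean document; each statement's English description precedes it below -/
import Mathlib

section
/- Let E be a set, let L be any map sending real-valued functions on E to real-valued functions on E, and let p, φ : E → ℝ be nowhere-vanishing functions. Define (Lrev f)(x) := p(x)⁻¹·(L(p·f)(x) − f(x)·(L p)(x)), (K f)(x) := φ(x)⁻¹·(L(φ·f)(x) − f(x)·(L φ)(x)), and η := φ/p (pointwise). Then for every function f : E → ℝ and every x ∈ E, η(x)⁻¹·(Lrev f)(x) = K(η⁻¹·f)(x) − f(x)·(K η⁻¹)(x), where η⁻¹ denotes the pointwise reciprocal of η. -/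
/-!
Both `Lrev` and `K` are Doob transforms `L^g f = g⁻¹ (L (g f) - f L g)` of the same map `L`,
with `g = p` and `g = φ`. Doob transforms compose multiplicatively, `(L^g)^h = L^(g h)`, and
`p = φ η⁻¹`, so `Lrev` is the Doob transform of `K` by `η⁻¹`; multiplying out the prefactor
`η` of that transform gives the identity.
-/

section DoobTransform

variable {E 𝕜 : Type*} [Field 𝕜]

def doobTransform (L : (E → 𝕜) → E → 𝕜) (g : E → 𝕜) : (E → 𝕜) → E → 𝕜 :=
  fun f x => (g x)⁻¹ * (L (fun y => g y * f y) x - f x * L g x)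

theorem doobTransform_doobTransform (L : (E → 𝕜) → E → 𝕜) (g h : E → 𝕜) :
    doobTransform (doobTransform L g) h = doobTransform L (g * h) := by
  funext f x
  simp only [doobTransform, Pi.mul_apply, mul_assoc, mul_inv]
  rw [show (fun y => g y * h y) = g * h from rfl]
  ring

theorem mul_doobTransform_apply (L : (E → 𝕜) → E → 𝕜) {g : E → 𝕜} (f : E → 𝕜) {x : E}
    (hg : g x ≠ 0) :
    g x * doobTransform L g f x = L (fun y => g y * f y) x - f x * L g x :=
  mul_inv_cancel_left₀ hg _

end DoobTransform

/-- With `Lrev`, `K`, and `η = φ / p` defined as in the denoising Markov model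
framework from any map `L` and nowhere-vanishing `p, φ`, the roles of `Lrev` and `K` can be
exchanged with `η` replaced by its pointwise reciprocal:
`η x⁻¹ * Lrev f x = K (η⁻¹ * f) x - f x * K η⁻¹ x`. -/
theorem stmt1 {E : Type*} (L : (E → ℝ) → (E → ℝ)) (p φ : E → ℝ)
    (hp : ∀ x, p x ≠ 0) (hφ : ∀ x, φ x ≠ 0)
    (Lrev : (E → ℝ) → (E → ℝ))
    (hLrev : ∀ (f : E → ℝ) (x : E),
      Lrev f x = (p x)⁻¹ * (L (fun y => p y * f y) x - f x * L p x))
    (K : (E → ℝ) → (E → ℝ))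
    (hK : ∀ (f : E → ℝ) (x : E),
      K f x = (φ x)⁻¹ * (L (fun y => φ y * f y) x - f x * L φ x))
    (η : E → ℝ) (hη : ∀ x, η x = φ x / p x) :
    ∀ (f : E → ℝ) (x : E),
      (η x)⁻¹ * Lrev f x
        = K (fun y => (η y)⁻¹ * f y) x - f x * K (fun y => (η y)⁻¹) x := by
  intro f x
  have hLrev_eq : Lrev = doobTransform L p := funext₂ hLrev
  have hK_eq : K = doobTransform L φ := funext₂ hK
  have hp_eq : p = φ * η⁻¹ := by
    funext y
    simp only [Pi.mul_apply, Pi.inv_apply, hη, inv_div, mul_div_cancel₀ _ (hφ y)]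
  have hη_inv : (η x)⁻¹ ≠ 0 := by simp [hη, hp x, hφ x]
  rw [hLrev_eq, hp_eq, ← doobTransform_doobTransform, ← hK_eq]
  exact mul_doobTransform_apply K (g := η⁻¹) f hη_inv
end

section
/- Let X₀ and X be finite types, let p₀ : X₀ → ℝ be nonnegative, let pc : X₀ → X → ℝ be strictly positive, and define p(x) := Σ_{x₀ ∈ X₀} p₀(x₀)·pc(x₀, x); assume p(x) > 0 for all x. Let φ : X → ℝ be strictly positive and let λ : X × X → ℝ. Define the score s(x, y) := p(y)/p(x) and the estimated score ŝ(x, y) := φ(y)/φ(x). Then Σ_{x,y ∈ X} p(x)·( ŝ(x,y)/s(x,y) − 1 − log(ŝ(x,y)/s(x,y)) )·s(x,y)·λ(x,y) = Σ_{x₀ ∈ X₀} Σ_{x,y ∈ X} p₀(x₀)·pc(x₀, x)·( ŝ(x,y) − (pc(x₀, y)/pc(x₀, x))·log ŝ(x,y) )·λ(x,y) + C, where C := Σ_{x,y ∈ X} p(y)·( log s(x,y) − 1 )·λ(x,y) does not depend on φ. -/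
/-- Score-matching identity for discrete diffusion models: the (time-fixed)
KL objective between true and estimated backward jump processes equals the practical
denoising score-matching loss plus a constant `C` independent of the estimate `φ`. Here
`p₀` is the data distribution on `X₀`, `pc x₀` the conditional distribution of the forward
chain given initial state `x₀`, `p` the marginal, `s x y = p y / p x` the score, and
`ŝ x y = φ y / φ x` its estimate. -/
theorem stmt6 {X₀ X : Type*} [Fintype X₀] [Fintype X]
    (p₀ : X₀ → ℝ) (hp₀ : ∀ x₀, 0 ≤ p₀ x₀)
    (pc : X₀ → X → ℝ) (hpc : ∀ x₀ x, 0 < pc x₀ x)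
    (p : X → ℝ) (hp : ∀ x, p x = ∑ x₀, p₀ x₀ * pc x₀ x)
    (hppos : ∀ x, 0 < p x)
    (φ : X → ℝ) (hφ : ∀ x, 0 < φ x)
    (lam : X × X → ℝ)
    (s sHat : X → X → ℝ)
    (hs : ∀ x y, s x y = p y / p x)
    (hsHat : ∀ x y, sHat x y = φ y / φ x)
    (C : ℝ)
    (hC : C = ∑ x, ∑ y, p y * (Real.log (s x y) - 1) * lam (x, y)) :
    ∑ x, ∑ y, p x * (sHat x y / s x y - 1 - Real.log (sHat x y / s x y)) * s x y * lam (x, y)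
      = (∑ x₀, ∑ x, ∑ y,
          p₀ x₀ * pc x₀ x * (sHat x y - (pc x₀ y / pc x₀ x) * Real.log (sHat x y)) * lam (x, y))
        + C := by
  subst hC
  have key : ∀ x y : X,
      p x * (sHat x y / s x y - 1 - Real.log (sHat x y / s x y)) * s x y * lam (x, y)
      = (∑ x₀, p₀ x₀ * pc x₀ x * (sHat x y - (pc x₀ y / pc x₀ x) * Real.log (sHat x y))
          * lam (x, y))
        + p y * (Real.log (s x y) - 1) * lam (x, y) := by
    intro x y
    have hsxy : s x y = p y / p x := hs x y
    have hspos : 0 < s x y := by rw [hsxy]; exact div_pos (hppos y) (hppos x)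
    have hshatpos : 0 < sHat x y := by
      rw [hsHat]; exact div_pos (hφ y) (hφ x)
    have hlog : Real.log (sHat x y / s x y)
        = Real.log (sHat x y) - Real.log (s x y) :=
      Real.log_div hshatpos.ne' hspos.ne'
    have hps : p x * s x y = p y := by
      rw [hsxy, mul_comm, div_mul_cancel₀ _ (hppos x).ne']
    have h1 : sHat x y / s x y * s x y = sHat x y := div_mul_cancel₀ _ hspos.ne'
    have hsum : ∑ x₀, p₀ x₀ * pc x₀ x *
          (sHat x y - (pc x₀ y / pc x₀ x) * Real.log (sHat x y)) * lam (x, y)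
        = (p x * sHat x y - p y * Real.log (sHat x y)) * lam (x, y) := by
      have step : ∀ x₀ : X₀, p₀ x₀ * pc x₀ x *
            (sHat x y - (pc x₀ y / pc x₀ x) * Real.log (sHat x y)) * lam (x, y)
          = (p₀ x₀ * pc x₀ x * sHat x y
              - p₀ x₀ * pc x₀ y * Real.log (sHat x y)) * lam (x, y) := by
        intro x₀
        have h := (hpc x₀ x).ne'
        field_simp
      rw [Finset.sum_congr rfl fun x₀ _ => step x₀, ← Finset.sum_mul,
        Finset.sum_sub_distrib, ← Finset.sum_mul, ← Finset.sum_mul, ← hp, ← hp]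
    rw [hsum, hlog]
    linear_combination lam (x, y) * p x * h1
      + lam (x, y) * (Real.log (s x y) - Real.log (sHat x y) - 1) * hps
  simp_rw [key, Finset.sum_add_distrib]
  congr 1
  calc ∑ x, ∑ y, ∑ x₀, p₀ x₀ * pc x₀ x *
          (sHat x y - pc x₀ y / pc x₀ x * Real.log (sHat x y)) * lam (x, y)
      = ∑ x, ∑ x₀, ∑ y, p₀ x₀ * pc x₀ x *
          (sHat x y - pc x₀ y / pc x₀ x * Real.log (sHat x y)) * lam (x, y) :=
        Finset.sum_congr rfl fun x _ => Finset.sum_comm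
    _ = ∑ x₀, ∑ x, ∑ y, p₀ x₀ * pc x₀ x *
          (sHat x y - pc x₀ y / pc x₀ x * Real.log (sHat x y)) * lam (x, y) :=
        Finset.sum_comm
end

section
/- Let d ≥ 1, let b₁, …, b_d : ℝ^d → ℝ be continuously differentiable, let D_{ij} : ℝ^d → ℝ (1 ≤ i, j ≤ d) be twice continuously differentiable with D_{ij} = D_{ji}, let p : ℝ^d → ℝ be twice continuously differentiable and strictly positive, and let f : ℝ^d → ℝ be twice continuously differentiable. Define (L* g)(x) := −Σ_i ∂_i(b_i·g)(x) + ½ Σ_{i,j} ∂_i∂_j(D_{ij}·g)(x). Then for every x ∈ ℝ^d, p(x)⁻¹·L*(p·f)(x) − p(x)⁻¹·f(x)·(L* p)(x) = Σ_i ( −b_i(x) + Σ_j D_{ij}(x)·∂_j(log p)(x) + Σ_j ∂_j D_{ij}(x) )·∂_i f(x) + ½ Σ_{i,j} D_{ij}(x)·∂_i∂_j f(x). -/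
/-- The partial derivative `∂_i h` of a function `h : ℝ^d → ℝ` in the `i`-th coordinate
direction. -/
noncomputable def pd {d : ℕ} (i : Fin d) (h : EuclideanSpace ℝ (Fin d) → ℝ)
    (x : EuclideanSpace ℝ (Fin d)) : ℝ :=
  fderiv ℝ h x (EuclideanSpace.single i 1)

variable {d : ℕ}

lemma pd_mul {u v : EuclideanSpace ℝ (Fin d) → ℝ} (i : Fin d) (x)
    (hu : DifferentiableAt ℝ u x) (hv : DifferentiableAt ℝ v x) :
    pd i (fun y => u y * v y) x = pd i u x * v x + u x * pd i v x := by
  unfold pd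
  rw [fderiv_fun_mul hu hv]
  simp [mul_comm]
  ring

lemma pd_contDiff {u : EuclideanSpace ℝ (Fin d) → ℝ} (j : Fin d) (hu : ContDiff ℝ 2 u) :
    ContDiff ℝ 1 (pd j u) := by
  have h1 : ContDiff ℝ 1 (fderiv ℝ u) := hu.fderiv_right (by norm_num)
  exact (ContinuousLinearMap.apply ℝ ℝ (EuclideanSpace.single j 1)).contDiff.comp h1

lemma pd_add {u v : EuclideanSpace ℝ (Fin d) → ℝ} (i : Fin d) (x)
    (hu : DifferentiableAt ℝ u x) (hv : DifferentiableAt ℝ v x) :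
    pd i (fun y => u y + v y) x = pd i u x + pd i v x := by
  unfold pd
  rw [fderiv_fun_add hu hv]
  simp

lemma pd_pd_mul {u v : EuclideanSpace ℝ (Fin d) → ℝ} (i j : Fin d) (x)
    (hu : ContDiff ℝ 2 u) (hv : ContDiff ℝ 2 v) :
    pd i (pd j (fun y => u y * v y)) x
      = pd i (pd j u) x * v x + pd j u x * pd i v x + pd i u x * pd j v x
        + u x * pd i (pd j v) x := by
  have hu1 : ContDiff ℝ 1 u := hu.of_le (by norm_num)
  have hv1 : ContDiff ℝ 1 v := hv.of_le (by norm_num)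
  have h1 : pd j (fun y => u y * v y)
      = fun y => pd j u y * v y + u y * pd j v y := by
    funext y
    exact pd_mul j y (hu1.differentiable one_ne_zero y) (hv1.differentiable one_ne_zero y)
  rw [h1]
  have hju := pd_contDiff j hu
  have hjv := pd_contDiff j hv
  rw [pd_add i x (((hju.mul hv1).differentiable one_ne_zero) x)
    (((hu1.mul hjv).differentiable one_ne_zero) x),
    pd_mul i x ((hju.differentiable one_ne_zero) x) ((hv1.differentiable one_ne_zero) x),
    pd_mul i x ((hu1.differentiable one_ne_zero) x) ((hjv.differentiable one_ne_zero) x)]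
  ring

lemma pd_log {p : EuclideanSpace ℝ (Fin d) → ℝ} (j : Fin d) (x)
    (hp : DifferentiableAt ℝ p x) (hpx : p x ≠ 0) :
    pd j (fun y => Real.log (p y)) x = pd j p x / p x := by
  unfold pd
  have h : HasFDerivAt (fun y => Real.log (p y)) ((p x)⁻¹ • fderiv ℝ p x) x :=
    (Real.hasDerivAt_log hpx).comp_hasFDerivAt x hp.hasFDerivAt
  rw [h.fderiv]
  simp [div_eq_inv_mul]

lemma combine {ι : Type*} [Fintype ι] (c e : ℝ) (X Z : ι → ℝ) (Y W : ι → ι → ℝ) :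
    c * ((-∑ i, X i) + (1/2) * ∑ i, ∑ j, Y i j)
      - c * e * ((-∑ i, Z i) + (1/2) * ∑ i, ∑ j, W i j)
    = (∑ i, c * (e * Z i - X i))
      + (1/2) * ∑ i, ∑ j, c * (Y i j - e * W i j) := by
  simp only [mul_sub, Finset.sum_sub_distrib, ← Finset.mul_sum]
  ring

/-- Anderson's time-reversal formula for diffusions: with
`L* g = − Σᵢ ∂ᵢ(bᵢ g) + ½ Σᵢⱼ ∂ᵢ∂ⱼ(Dᵢⱼ g)` the adjoint of the diffusion generator, `D`
symmetric, and `p` twice continuously differentiable and strictly positive, the backward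
generator `p⁻¹ L*(p f) − p⁻¹ f L* p` equals
`Σᵢ (−bᵢ + Σⱼ Dᵢⱼ ∂ⱼ log p + Σⱼ ∂ⱼ Dᵢⱼ) ∂ᵢ f + ½ Σᵢⱼ Dᵢⱼ ∂ᵢ∂ⱼ f` pointwise. -/
theorem stmt8 (d : ℕ) (hd : 1 ≤ d)
    (b : Fin d → EuclideanSpace ℝ (Fin d) → ℝ)
    (D : Fin d → Fin d → EuclideanSpace ℝ (Fin d) → ℝ)
    (p f : EuclideanSpace ℝ (Fin d) → ℝ)
    (hb : ∀ i, ContDiff ℝ 1 (b i))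
    (hD : ∀ i j, ContDiff ℝ 2 (D i j))
    (hDsymm : ∀ i j, D i j = D j i)
    (hp : ContDiff ℝ 2 p) (hppos : ∀ x, 0 < p x)
    (hf : ContDiff ℝ 2 f)
    (Lstar : (EuclideanSpace ℝ (Fin d) → ℝ) → EuclideanSpace ℝ (Fin d) → ℝ)
    (hLstar : ∀ (h : EuclideanSpace ℝ (Fin d) → ℝ) (x : EuclideanSpace ℝ (Fin d)),
      Lstar h x = (- ∑ i, pd i (fun y => b i y * h y) x)
        + (1/2) * ∑ i, ∑ j, pd i (pd j (fun y => D i j y * h y)) x)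
    (x : EuclideanSpace ℝ (Fin d)) :
    (p x)⁻¹ * Lstar (fun y => p y * f y) x - (p x)⁻¹ * f x * Lstar p x
      = (∑ i, (- b i x + (∑ j, D i j x * pd j (fun y => Real.log (p y)) x)
          + ∑ j, pd j (D i j) x) * pd i f x)
        + (1/2) * ∑ i, ∑ j, D i j x * pd i (pd j f) x := by
  have hne : p x ≠ 0 := (hppos x).ne'
  have hp1 : Differentiable ℝ p := hp.differentiable (by norm_num)
  have hf1 : Differentiable ℝ f := hf.differentiable (by norm_num)
  have hb1 : ∀ i, Differentiable ℝ (b i) := fun i => (hb i).differentiable one_ne_zero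
  have hpf : ContDiff ℝ 2 (fun y => p y * f y) := hp.mul hf
  have key1 : ∀ i : Fin d,
      (p x)⁻¹ * (f x * pd i (fun y => b i y * p y) x
        - pd i (fun y => b i y * (p y * f y)) x) = -(b i x * pd i f x) := by
    intro i
    rw [pd_mul (u := b i) (v := p) i x (hb1 i x) (hp1 x),
      pd_mul (u := b i) (v := fun y => p y * f y) i x (hb1 i x)
        ((hpf.differentiable (by norm_num)) x),
      pd_mul (u := p) (v := f) i x (hp1 x) (hf1 x)]
    field_simp
    ring
  have key2 : ∀ i j : Fin d,
      (p x)⁻¹ * (pd i (pd j (fun y => D i j y * (p y * f y))) x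
        - f x * pd i (pd j (fun y => D i j y * p y)) x)
      = pd j (D i j) x * pd i f x + pd i (D i j) x * pd j f x
        + D i j x * (pd j p x / p x) * pd i f x
        + D i j x * (pd i p x / p x) * pd j f x
        + D i j x * pd i (pd j f) x := by
    intro i j
    rw [pd_pd_mul (u := D i j) (v := fun y => p y * f y) i j x (hD i j) hpf,
      pd_pd_mul (u := D i j) (v := p) i j x (hD i j) hp,
      pd_pd_mul (u := p) (v := f) i j x hp hf,
      pd_mul (u := p) (v := f) i x (hp1 x) (hf1 x),
      pd_mul (u := p) (v := f) j x (hp1 x) (hf1 x)]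
    field_simp
    ring
  have e5 : ∀ j : Fin d, pd j (fun y => Real.log (p y)) x = pd j p x / p x :=
    fun j => pd_log j x (hp1 x) hne
  have sw1 : ∑ i : Fin d, ∑ j : Fin d, pd i (D i j) x * pd j f x
      = ∑ i : Fin d, ∑ j : Fin d, pd j (D i j) x * pd i f x := by
    rw [Finset.sum_comm]
    exact Finset.sum_congr rfl fun a _ => Finset.sum_congr rfl fun c _ => by
      rw [hDsymm a c]
  have sw2 : ∑ i : Fin d, ∑ j : Fin d, D i j x * (pd i p x / p x) * pd j f x
      = ∑ i : Fin d, ∑ j : Fin d, D i j x * (pd j p x / p x) * pd i f x := by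
    rw [Finset.sum_comm]
    exact Finset.sum_congr rfl fun a _ => Finset.sum_congr rfl fun c _ => by
      rw [hDsymm a c]
  rw [hLstar, hLstar, combine]
  simp only [key1, key2, e5]
  simp only [Finset.sum_add_distrib, add_mul, Finset.sum_mul, neg_mul]
  rw [sw1, sw2]
  ring
end

section
/- Let ν be a probability measure on a measurable space Y. For each y ∈ Y let q(·|y) : ℝ^d → (0, ∞) be a continuously differentiable probability density (with joint measurability in (x, y)), define the marginal q(x) := ∫_Y q(x|y) dν(y), and assume q(x) ∈ (0, ∞) for all x, q is differentiable, and ∇q(x) = ∫_Y ∇_x q(x|y) dν(y) for all x. Let ŝ : ℝ^d → ℝ^d be measurable and assume the finiteness of the integrals ∫_Y ∫_{ℝ^d} ‖ŝ(x)‖² q(x|y) dx dν(y), ∫_Y ∫_{ℝ^d} ‖∇_x log q(x|y)‖² q(x|y) dx dν(y), and ∫_{ℝ^d} ‖∇ log q(x)‖² q(x) dx. Then ∫_Y ∫_{ℝ^d} ½ ‖ŝ(x) − ∇_x log q(x|y)‖² q(x|y) dx dν(y) − ∫_{ℝ^d} ½ ‖ŝ(x) − ∇ log q(x)‖² q(x)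 dx = ∫_Y ∫_{ℝ^d} ½ ‖∇_x log q(x|y)‖² q(x|y) dx dν(y) − ∫_{ℝ^d} ½ ‖∇ log q(x)‖² q(x) dx; in particular, the left-hand difference does not depend on ŝ. -/
open MeasureTheory Filter

lemma aux_gradient_log {d : ℕ} {f : EuclideanSpace ℝ (Fin d) → ℝ}
    {x : EuclideanSpace ℝ (Fin d)}
    (hf : DifferentiableAt ℝ f x) (hfx : f x ≠ 0) :
    gradient (fun x' => Real.log (f x')) x = (f x)⁻¹ • gradient f x := by
  have h3 : HasFDerivAt (fun x' => Real.log (f x')) ((f x)⁻¹ • fderiv ℝ f x) x :=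
    (Real.hasDerivAt_log hfx).comp_hasFDerivAt x hf.hasFDerivAt
  rw [h3.hasGradientAt.gradient, _root_.map_smul]
  rfl

lemma aux_meas_fderiv_apply {d : ℕ} {Y : Type*} [MeasurableSpace Y]
    (f : Y → EuclideanSpace ℝ (Fin d) → ℝ)
    (hm : Measurable (Function.uncurry f))
    (hdiff : ∀ y, Differentiable ℝ (f y)) (v : EuclideanSpace ℝ (Fin d)) :
    Measurable (fun p : Y × EuclideanSpace ℝ (Fin d) => fderiv ℝ (f p.1) p.2 v) := by
  have tend : ∀ p : Y × EuclideanSpace ℝ (Fin d),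
      Tendsto (fun n : ℕ => ((n : ℝ) + 1) * (f p.1 (p.2 + ((n : ℝ) + 1)⁻¹ • v) - f p.1 p.2))
        atTop (nhds (fderiv ℝ (f p.1) p.2 v)) := by
    intro p
    have h2 : HasDerivAt (fun t : ℝ => f p.1 (p.2 + t • v)) (fderiv ℝ (f p.1) p.2 v) 0 := by
      have hline : HasDerivAt (fun t : ℝ => p.2 + t • v) v 0 := by
        simpa using ((hasDerivAt_id (0 : ℝ)).smul_const v).const_add p.2
      have := (hdiff p.1 (p.2 + (0:ℝ) • v)).hasFDerivAt.comp_hasDerivAt 0 hline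
      simp only [zero_smul, add_zero] at this
      exact this
    have hslope := h2.tendsto_slope_zero
    have hseq : Tendsto (fun n : ℕ => ((n : ℝ) + 1)⁻¹) atTop (nhdsWithin 0 {(0:ℝ)}ᶜ) := by
      apply tendsto_nhdsWithin_of_tendsto_nhds_of_eventually_within
      · simpa only [one_div] using tendsto_one_div_add_atTop_nhds_zero_nat (𝕜 := ℝ)
      · refine Eventually.of_forall fun n => ?_
        simp only [Set.mem_compl_iff, Set.mem_singleton_iff]
        positivity
    have hcomp := hslope.comp hseq
    refine hcomp.congr fun n => ?_
    have hne : ((n : ℝ) + 1) ≠ 0 := by positivity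
    simp [Function.comp, smul_eq_mul, inv_inv, zero_add]
  exact measurable_of_tendsto_metrizable
    (fun n => (hm.comp (measurable_fst.prodMk
      (measurable_snd.add_const (((n : ℝ) + 1)⁻¹ • v)))).sub
      (hm.comp (measurable_fst.prodMk measurable_snd)) |>.const_mul _)
    (tendsto_pi_nhds.mpr tend)

lemma aux_meas_gradient {d : ℕ} {Y : Type*} [MeasurableSpace Y]
    (f : Y → EuclideanSpace ℝ (Fin d) → ℝ)
    (hm : Measurable (Function.uncurry f))
    (hdiff : ∀ y, Differentiable ℝ (f y)) :
    Measurable (fun p : Y × EuclideanSpace ℝ (Fin d) => gradient (f p.1) p.2) := by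
  have hrepr : ∀ (y : Y) (x : EuclideanSpace ℝ (Fin d)),
      gradient (f y) x = ∑ i : Fin d,
        (fderiv ℝ (f y) x (EuclideanSpace.basisFun (Fin d) ℝ i)) •
          EuclideanSpace.basisFun (Fin d) ℝ i := by
    intro y x
    have h := (EuclideanSpace.basisFun (Fin d) ℝ).sum_repr' (gradient (f y) x)
    rw [← h]
    refine Finset.sum_congr rfl fun i _ => ?_
    congr 1
    rw [real_inner_comm]
    show (inner ℝ (gradient (f y) x) (EuclideanSpace.basisFun (Fin d) ℝ i) : ℝ) = _
    rw [gradient, InnerProductSpace.toDual_symm_apply]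
  have : (fun p : Y × EuclideanSpace ℝ (Fin d) => gradient (f p.1) p.2)
      = fun p => ∑ i : Fin d, (fderiv ℝ (f p.1) p.2 (EuclideanSpace.basisFun (Fin d) ℝ i)) •
          EuclideanSpace.basisFun (Fin d) ℝ i := funext fun p => hrepr p.1 p.2
  rw [this]
  exact Finset.measurable_sum _ fun i _ =>
    (aux_meas_fderiv_apply f hm hdiff _).smul_const _


set_option maxHeartbeats 1000000 in
/-- Denoising score-matching identity: for conditional densities
`qc y` of the forward process given `y ∼ ν`, marginal `q x = ∫ qc y x dν(y)`, and any
measurable candidate score `ŝ`, the conditional score-matching objective and the marginal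
score-matching objective differ by a constant independent of `ŝ`. -/
theorem stmt10 (d : ℕ) (hd : 1 ≤ d)
    {Y : Type*} [MeasurableSpace Y] (ν : Measure Y) [IsProbabilityMeasure ν]
    (qc : Y → EuclideanSpace ℝ (Fin d) → ℝ)
    (hqc_pos : ∀ y x, 0 < qc y x)
    (hqc_smooth : ∀ y, ContDiff ℝ 1 (qc y))
    (hqc_prob : ∀ y, ∫ x, qc y x = 1)
    (hqc_meas : Measurable (Function.uncurry qc))
    (q : EuclideanSpace ℝ (Fin d) → ℝ)
    (hq : ∀ x, q x = ∫ y, qc y x ∂ν)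
    (hq_pos : ∀ x, 0 < q x)
    (hq_diff : Differentiable ℝ q)
    (hq_grad : ∀ x, gradient q x = ∫ y, gradient (qc y) x ∂ν)
    (sHat : EuclideanSpace ℝ (Fin d) → EuclideanSpace ℝ (Fin d))
    (hsHat : Measurable sHat)
    (hint1 : Integrable (fun p : Y × EuclideanSpace ℝ (Fin d) =>
      ‖sHat p.2‖ ^ 2 * qc p.1 p.2) (ν.prod volume))
    (hint2 : Integrable (fun p : Y × EuclideanSpace ℝ (Fin d) =>
      ‖gradient (fun x => Real.log (qc p.1 x)) p.2‖ ^ 2 * qc p.1 p.2) (ν.prod volume))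
    (hint3 : Integrable (fun x => ‖gradient (fun x' => Real.log (q x')) x‖ ^ 2 * q x)) :
    (∫ y, (∫ x, (1/2) * ‖sHat x - gradient (fun x' => Real.log (qc y x')) x‖ ^ 2 * qc y x) ∂ν)
      - ∫ x, (1/2) * ‖sHat x - gradient (fun x' => Real.log (q x')) x‖ ^ 2 * q x
      = (∫ y, (∫ x, (1/2) * ‖gradient (fun x' => Real.log (qc y x')) x‖ ^ 2 * qc y x) ∂ν)
        - ∫ x, (1/2) * ‖gradient (fun x' => Real.log (q x')) x‖ ^ 2 * q x := by
  classical
  have hqc_diff : ∀ y, Differentiable ℝ (qc y) := fun y => (hqc_smooth y).differentiable one_ne_zero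
  -- pointwise integrability in y
  have hqc_int : ∀ x, Integrable (fun y => qc y x) ν := by
    intro x
    by_contra h
    have h0 := integral_undef h
    have h1 := hq x
    rw [h0] at h1
    exact absurd h1 (ne_of_gt (hq_pos x))
  -- gradient of log formulas
  have hgc : ∀ y x, gradient (fun x' => Real.log (qc y x')) x = (qc y x)⁻¹ • gradient (qc y) x := fun y x =>
    aux_gradient_log (hqc_diff y x) (hqc_pos y x).ne'
  have grad_qc : ∀ y x, gradient (qc y) x = qc y x • gradient (fun x' => Real.log (qc y x')) x := by
    intro y x
    rw [hgc, smul_smul, mul_inv_cancel₀ (hqc_pos y x).ne', one_smul]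
  have hGq : ∀ x, gradient (fun x' => Real.log (q x')) x = (q x)⁻¹ • gradient q x := fun x =>
    aux_gradient_log (hq_diff x) (hq_pos x).ne'
  have grad_q : ∀ x, gradient q x = q x • gradient (fun x' => Real.log (q x')) x := by
    intro x
    rw [hGq, smul_smul, mul_inv_cancel₀ (hq_pos x).ne', one_smul]
  -- measurability
  have mqcp : Measurable (fun p : Y × EuclideanSpace ℝ (Fin d) => qc p.1 p.2) := hqc_meas
  have mgradqc : Measurable (fun p : Y × EuclideanSpace ℝ (Fin d) => gradient (qc p.1) p.2) :=
    aux_meas_gradient qc hqc_meas hqc_diff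
  have mgp : Measurable (fun p : Y × EuclideanSpace ℝ (Fin d) => gradient (fun x' => Real.log (qc p.1 x')) p.2) := by
    have he : (fun p : Y × EuclideanSpace ℝ (Fin d) => gradient (fun x' => Real.log (qc p.1 x')) p.2) = fun p => (qc p.1 p.2)⁻¹ • gradient (qc p.1) p.2 :=
      funext fun p => hgc p.1 p.2
    rw [he]
    exact mqcp.inv.smul mgradqc
  have mq : Measurable q := hq_diff.continuous.measurable
  have mgradq : Measurable (fun x : EuclideanSpace ℝ (Fin d) => gradient q x) := by
    have : (fun x : EuclideanSpace ℝ (Fin d) => gradient q x)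
        = fun x => (InnerProductSpace.toDual ℝ (EuclideanSpace ℝ (Fin d))).symm (fderiv ℝ q x) := rfl
    rw [this]
    exact ((InnerProductSpace.toDual ℝ (EuclideanSpace ℝ (Fin d))).symm.continuous.measurable).comp (measurable_fderiv ℝ q)
  have mG : Measurable (fun x : EuclideanSpace ℝ (Fin d) => gradient (fun x' => Real.log (q x')) x) := by
    have he : (fun x : EuclideanSpace ℝ (Fin d) => gradient (fun x' => Real.log (q x')) x) = fun x => (q x)⁻¹ • gradient q x := funext hGq
    rw [he]
    exact mq.inv.smul mgradq
  -- cross term integrable on the product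
  have hIc : Integrable (fun p : Y × EuclideanSpace ℝ (Fin d) =>
      (inner ℝ (sHat p.2) (gradient (fun x' => Real.log (qc p.1 x')) p.2) : ℝ) * qc p.1 p.2) (ν.prod volume) := by
    have hbound : Integrable (fun p : Y × EuclideanSpace ℝ (Fin d) =>
        (1/2) * (‖sHat p.2‖ ^ 2 * qc p.1 p.2
          + ‖gradient (fun x' => Real.log (qc p.1 x')) p.2‖ ^ 2 * qc p.1 p.2)) (ν.prod volume) := by
      have h := (hint1.add hint2).const_mul (1/2)
      refine h.congr (Filter.Eventually.of_forall fun p => ?_)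
      simp [Pi.add_apply]
    refine Integrable.mono' hbound
      (((hsHat.comp measurable_snd).inner mgp).mul mqcp).aestronglyMeasurable ?_
    refine Filter.Eventually.of_forall fun p => ?_
    have h1 : |(inner ℝ (sHat p.2) (gradient (fun x' => Real.log (qc p.1 x')) p.2) : ℝ)| ≤ ‖sHat p.2‖ * ‖gradient (fun x' => Real.log (qc p.1 x')) p.2‖ :=
      abs_real_inner_le_norm _ _
    have h2 : (0:ℝ) < qc p.1 p.2 := hqc_pos _ _
    rw [Real.norm_eq_abs, abs_mul, abs_of_pos h2]
    have h3 : |(inner ℝ (sHat p.2) (gradient (fun x' => Real.log (qc p.1 x')) p.2) : ℝ)| * qc p.1 p.2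
        ≤ (‖sHat p.2‖ * ‖gradient (fun x' => Real.log (qc p.1 x')) p.2‖) * qc p.1 p.2 :=
      mul_le_mul_of_nonneg_right h1 h2.le
    nlinarith [sq_nonneg (‖sHat p.2‖ - ‖gradient (fun x' => Real.log (qc p.1 x')) p.2‖), h2.le]
  -- expansion identity
  have expand : ∀ (s gr : EuclideanSpace ℝ (Fin d)) (c : ℝ),
      (1/2) * ‖s - gr‖ ^ 2 * c
        = (1/2) * (‖s‖ ^ 2 * c) - (inner ℝ s gr : ℝ) * c + (1/2) * (‖gr‖ ^ 2 * c) := by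
    intro s gr c
    rw [norm_sub_sq_real]
    ring
  -- full integrand integrable on product
  have hIfull : Integrable (fun p : Y × EuclideanSpace ℝ (Fin d) =>
      (1/2) * ‖sHat p.2 - gradient (fun x' => Real.log (qc p.1 x')) p.2‖ ^ 2 * qc p.1 p.2) (ν.prod volume) := by
    refine (((hint1.const_mul (1/2)).sub hIc).add (hint2.const_mul (1/2))).congr
      (Filter.Eventually.of_forall fun p => ?_)
    exact (expand (sHat p.2) (gradient (fun x' => Real.log (qc p.1 x')) p.2) (qc p.1 p.2)).symm
  -- LHS double integral
  have hL : (∫ y, (∫ x, (1/2) * ‖sHat x - gradient (fun x' => Real.log (qc y x')) x‖ ^ 2 * qc y x) ∂ν)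
      = (1/2) * (∫ p : Y × EuclideanSpace ℝ (Fin d), ‖sHat p.2‖ ^ 2 * qc p.1 p.2 ∂(ν.prod volume))
        - (∫ p : Y × EuclideanSpace ℝ (Fin d), (inner ℝ (sHat p.2) (gradient (fun x' => Real.log (qc p.1 x')) p.2) : ℝ) * qc p.1 p.2 ∂(ν.prod volume))
        + (1/2) * (∫ p : Y × EuclideanSpace ℝ (Fin d), ‖gradient (fun x' => Real.log (qc p.1 x')) p.2‖ ^ 2 * qc p.1 p.2 ∂(ν.prod volume)) := by
    rw [MeasureTheory.integral_integral hIfull]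
    have he : (fun p : Y × EuclideanSpace ℝ (Fin d) => (1/2) * ‖sHat p.2 - gradient (fun x' => Real.log (qc p.1 x')) p.2‖ ^ 2 * qc p.1 p.2)
        = fun p => (1/2) * (‖sHat p.2‖ ^ 2 * qc p.1 p.2)
            - (inner ℝ (sHat p.2) (gradient (fun x' => Real.log (qc p.1 x')) p.2) : ℝ) * qc p.1 p.2
            + (1/2) * (‖gradient (fun x' => Real.log (qc p.1 x')) p.2‖ ^ 2 * qc p.1 p.2) :=
      funext fun p => expand _ _ _
    have i1 : Integrable (fun p : Y × EuclideanSpace ℝ (Fin d) =>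
        (1/2) * (‖sHat p.2‖ ^ 2 * qc p.1 p.2)
          - (inner ℝ (sHat p.2) (gradient (fun x' => Real.log (qc p.1 x')) p.2) : ℝ) * qc p.1 p.2)
        (ν.prod volume) := (hint1.const_mul _).sub hIc
    have i2 : Integrable (fun p : Y × EuclideanSpace ℝ (Fin d) =>
        (1/2) * (‖gradient (fun x' => Real.log (qc p.1 x')) p.2‖ ^ 2 * qc p.1 p.2))
        (ν.prod volume) := hint2.const_mul _
    rw [he, integral_add i1 i2, integral_sub (hint1.const_mul _) hIc,
      integral_const_mul, integral_const_mul]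
  -- RHS double integral
  have hIg2 : Integrable (fun p : Y × EuclideanSpace ℝ (Fin d) =>
      (1/2) * ‖gradient (fun x' => Real.log (qc p.1 x')) p.2‖ ^ 2 * qc p.1 p.2) (ν.prod volume) := by
    refine (hint2.const_mul (1/2)).congr (Filter.Eventually.of_forall fun p => ?_)
    ring
  have hR : (∫ y, (∫ x, (1/2) * ‖gradient (fun x' => Real.log (qc y x')) x‖ ^ 2 * qc y x) ∂ν)
      = (1/2) * (∫ p : Y × EuclideanSpace ℝ (Fin d), ‖gradient (fun x' => Real.log (qc p.1 x')) p.2‖ ^ 2 * qc p.1 p.2 ∂(ν.prod volume)) := by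
    rw [MeasureTheory.integral_integral hIg2]
    rw [← integral_const_mul]
    congr 1
    funext p
    ring
  -- marginal integrabilities
  have hIs' : Integrable (fun x : EuclideanSpace ℝ (Fin d) => ‖sHat x‖ ^ 2 * q x) := by
    have h2 := hint1.swap.integral_prod_left
    refine h2.congr (Filter.Eventually.of_forall fun x => ?_)
    show (∫ y, ‖sHat x‖ ^ 2 * qc y x ∂ν) = ‖sHat x‖ ^ 2 * q x
    rw [integral_const_mul, ← hq x]
  have hIc' : Integrable (fun x : EuclideanSpace ℝ (Fin d) => (inner ℝ (sHat x) (gradient (fun x' => Real.log (q x')) x) : ℝ) * q x) := by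
    have hbound : Integrable (fun x : EuclideanSpace ℝ (Fin d) =>
        (1/2) * (‖sHat x‖ ^ 2 * q x
          + ‖gradient (fun x' => Real.log (q x')) x‖ ^ 2 * q x)) := by
      have h := (hIs'.add hint3).const_mul (1/2)
      refine h.congr (Filter.Eventually.of_forall fun x => ?_)
      simp [Pi.add_apply]
    refine Integrable.mono' hbound
      ((hsHat.inner mG).mul mq).aestronglyMeasurable ?_
    refine Filter.Eventually.of_forall fun x => ?_
    have h1 : |(inner ℝ (sHat x) (gradient (fun x' => Real.log (q x')) x) : ℝ)| ≤ ‖sHat x‖ * ‖gradient (fun x' => Real.log (q x')) x‖ := abs_real_inner_le_norm _ _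
    have h2 : (0:ℝ) < q x := hq_pos x
    rw [Real.norm_eq_abs, abs_mul, abs_of_pos h2]
    have h3 : |(inner ℝ (sHat x) (gradient (fun x' => Real.log (q x')) x) : ℝ)| * q x ≤ (‖sHat x‖ * ‖gradient (fun x' => Real.log (q x')) x‖) * q x :=
      mul_le_mul_of_nonneg_right h1 h2.le
    nlinarith [sq_nonneg (‖sHat x‖ - ‖gradient (fun x' => Real.log (q x')) x‖), h2.le]
  have hIfull' : Integrable (fun x : EuclideanSpace ℝ (Fin d) => (1/2) * ‖sHat x - gradient (fun x' => Real.log (q x')) x‖ ^ 2 * q x) := by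
    refine (((hIs'.const_mul (1/2)).sub hIc').add (hint3.const_mul (1/2))).congr
      (Filter.Eventually.of_forall fun x => ?_)
    exact (expand (sHat x) (gradient (fun x' => Real.log (q x')) x) (q x)).symm
  -- marginal expansions
  have hM : (∫ x, (1/2) * ‖sHat x - gradient (fun x' => Real.log (q x')) x‖ ^ 2 * q x)
      = (1/2) * (∫ x, ‖sHat x‖ ^ 2 * q x)
        - (∫ x, (inner ℝ (sHat x) (gradient (fun x' => Real.log (q x')) x) : ℝ) * q x)
        + (1/2) * (∫ x, ‖gradient (fun x' => Real.log (q x')) x‖ ^ 2 * q x) := by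
    have he : (fun x : EuclideanSpace ℝ (Fin d) => (1/2) * ‖sHat x - gradient (fun x' => Real.log (q x')) x‖ ^ 2 * q x)
        = fun x => (1/2) * (‖sHat x‖ ^ 2 * q x) - (inner ℝ (sHat x) (gradient (fun x' => Real.log (q x')) x) : ℝ) * q x
            + (1/2) * (‖gradient (fun x' => Real.log (q x')) x‖ ^ 2 * q x) :=
      funext fun x => expand _ _ _
    have i1 : Integrable (fun x : EuclideanSpace ℝ (Fin d) =>
        (1/2) * (‖sHat x‖ ^ 2 * q x)
          - (inner ℝ (sHat x) (gradient (fun x' => Real.log (q x')) x) : ℝ) * q x) :=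
      (hIs'.const_mul _).sub hIc'
    have i2 : Integrable (fun x : EuclideanSpace ℝ (Fin d) =>
        (1/2) * (‖gradient (fun x' => Real.log (q x')) x‖ ^ 2 * q x)) := hint3.const_mul _
    rw [he, integral_add i1 i2, integral_sub (hIs'.const_mul _) hIc',
      integral_const_mul, integral_const_mul]
  have hMg : (∫ x, (1/2) * ‖gradient (fun x' => Real.log (q x')) x‖ ^ 2 * q x) = (1/2) * (∫ x, ‖gradient (fun x' => Real.log (q x')) x‖ ^ 2 * q x) := by
    rw [← integral_const_mul]
    congr 1
    funext x
    ring
  -- cross identities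
  have hIs : (∫ p : Y × EuclideanSpace ℝ (Fin d), ‖sHat p.2‖ ^ 2 * qc p.1 p.2 ∂(ν.prod volume))
      = ∫ x, ‖sHat x‖ ^ 2 * q x := by
    rw [integral_prod_symm _ hint1]
    refine integral_congr_ae (Filter.Eventually.of_forall fun x => ?_)
    show (∫ y, ‖sHat x‖ ^ 2 * qc y x ∂ν) = ‖sHat x‖ ^ 2 * q x
    rw [integral_const_mul, ← hq x]
  have hae : ∀ᵐ x ∂(volume : Measure (EuclideanSpace ℝ (Fin d))), Integrable (fun y => ‖gradient (fun x' => Real.log (qc y x')) x‖ ^ 2 * qc y x) ν :=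
    hint2.swap.prod_right_ae
  have hIcc : (∫ p : Y × EuclideanSpace ℝ (Fin d), (inner ℝ (sHat p.2) (gradient (fun x' => Real.log (qc p.1 x')) p.2) : ℝ) * qc p.1 p.2 ∂(ν.prod volume))
      = ∫ x, (inner ℝ (sHat x) (gradient (fun x' => Real.log (q x')) x) : ℝ) * q x := by
    rw [integral_prod_symm _ hIc]
    refine integral_congr_ae ?_
    filter_upwards [hae] with x hx
    have hgrad_int : Integrable (fun y => gradient (qc y) x) ν := by
      have hbound : Integrable (fun y =>
          (1/2) * (‖gradient (fun x' => Real.log (qc y x')) x‖ ^ 2 * qc y x + qc y x)) ν := by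
        have h := (hx.add (hqc_int x)).const_mul (1/2)
        refine h.congr (Filter.Eventually.of_forall fun y => ?_)
        simp [Pi.add_apply]
      refine Integrable.mono' hbound
        (mgradqc.comp (measurable_prodMk_right (y := x))).aestronglyMeasurable ?_
      refine Filter.Eventually.of_forall fun y => ?_
      rw [grad_qc, norm_smul, Real.norm_eq_abs, abs_of_pos (hqc_pos y x)]
      nlinarith [sq_nonneg (‖gradient (fun x' => Real.log (qc y x')) x‖ - 1), (hqc_pos y x).le, norm_nonneg (gradient (fun x' => Real.log (qc y x')) x),
        mul_nonneg (hqc_pos y x).le (norm_nonneg (gradient (fun x' => Real.log (qc y x')) x))]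
    calc (∫ y, (inner ℝ (sHat x) (gradient (fun x' => Real.log (qc y x')) x) : ℝ) * qc y x ∂ν)
        = ∫ y, (inner ℝ (sHat x) (gradient (qc y) x) : ℝ) ∂ν := by
          refine integral_congr_ae (Filter.Eventually.of_forall fun y => ?_)
          show (inner ℝ (sHat x) (gradient (fun x' => Real.log (qc y x')) x) : ℝ) * qc y x
            = (inner ℝ (sHat x) (gradient (qc y) x) : ℝ)
          rw [grad_qc, real_inner_smul_right]
          ring
      _ = (inner ℝ (sHat x) (∫ y, gradient (qc y) x ∂ν) : ℝ) := integral_inner hgrad_int _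
      _ = (inner ℝ (sHat x) (gradient q x) : ℝ) := by rw [← hq_grad x]
      _ = (inner ℝ (sHat x) (gradient (fun x' => Real.log (q x')) x) : ℝ) * q x := by
          rw [grad_q x, real_inner_smul_right]
          ring
  rw [hL, hR, hM, hMg, hIs, hIcc]
  ring
end
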